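/- Let n ≥ 2 and N ≥ 2 be integers, let G be a connected simple undirected graph on {1,…,N} with symmetric edge weights k_ij = k_ji > 0, set K = min over edges {i,j} of k_ij, and let x_1,…,x_N be unit vectors in ℝ^{n+1} forming a dispersed configuration. Then the largest eigenvalue β(x) of the real symmetric matrix B(x) satisfies β(x) ≥ (K/(n+1))·(n − 1 − cos(π/N))·(1 − cos(π/N)); in particular β(x) > 0. -/

import Mathlib

/-!
Testing the quadratic form of `B(x)` on the `n + 1` vectors `(P_i e_a)_i`, where
`P_i = I - x_i x_iᵀ`, and adding the Rayleigh quotients gives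
`β(x) · N n ≥ ∑_i ∑_{j ~ i} k_ij (1 - c_ij)(n - 1 - c_ij)` with `c_ij = ⟨x_i, x_j⟩ = cos θ_ij`.
A connected graph on `N` vertices has a vertex `r` within distance `N / 2` of all others, and
dispersion provides a vertex `l` with `θ_rl ≥ π / 2`. The angles along a shortest path from `r` to
`l` therefore add up to at least `π / 2`. As `θ ↦ (1 - cos θ)(n - 1 - cos θ)` is convex and
increasing on `[0, π / 2]` and vanishes at `0`, the at most `N / 2` edges of this path, each
counted twice in the double sum, contribute at least `K N (1 - cos (π / N))(n - 1 - cos (π / N))`.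
-/

open Matrix BigOperators Real

noncomputable section

/-- The orthogonal projection `I - x xᵀ` onto the hyperplane orthogonal to `x`. -/
def proj {n : ℕ} (x : Fin (n + 1) → ℝ) : Matrix (Fin (n + 1)) (Fin (n + 1)) ℝ :=
  1 - Matrix.vecMulVec x x

/-- The linearization `B(x)` of the homogeneous Lohe model, as an
`N(n+1) × N(n+1)` block matrix indexed by `Fin N × Fin (n+1)`. -/
def Bmat {n N : ℕ} (G : SimpleGraph (Fin N)) [DecidableRel G.Adj]
    (k : Fin N → Fin N → ℝ) (x : Fin N → Fin (n + 1) → ℝ) :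
    Matrix (Fin N × Fin (n + 1)) (Fin N × Fin (n + 1)) ℝ :=
  Matrix.of fun p q =>
    if p.1 = q.1 then
      ((-(∑ l ∈ G.neighborFinset p.1, k p.1 l * (x l ⬝ᵥ x p.1))) • proj (x p.1)) p.2 q.2
    else if G.Adj p.1 q.1 then
      (k p.1 q.1 • (proj (x p.1) * proj (x q.1))) p.2 q.2
    else 0

open Set InnerProductGeometry

def edgeEnergy (ν c : ℝ) : ℝ := (1 - c) * (ν - 1 - c)

lemma edgeEnergy_nonneg {ν c : ℝ} (hν : 2 ≤ ν) (hc : c ≤ 1) : 0 ≤ edgeEnergy ν c :=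
  mul_nonneg (by linarith) (by linarith)

lemma monotoneOn_edgeEnergy_cos {ν : ℝ} (hν : 2 ≤ ν) :
    MonotoneOn (fun θ => edgeEnergy ν (cos θ)) (Icc 0 π) := by
  intro a ha b hb hab
  have := antitoneOn_cos ha hb hab
  have := neg_one_le_cos b
  have := cos_le_one a
  simp only [edgeEnergy]
  nlinarith

lemma convexOn_edgeEnergy_cos {ν : ℝ} (hν : 2 ≤ ν) :
    ConvexOn ℝ (Icc 0 (π / 2)) (fun θ => edgeEnergy ν (cos θ)) := by
  have hcos : ConcaveOn ℝ (Icc 0 (π / 2)) cos :=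
    strictConcaveOn_cos_Icc.concaveOn.subset (Icc_subset_Icc (by linarith [pi_pos]) le_rfl)
      (convex_Icc _ _)
  have hu : ConvexOn ℝ (Icc 0 (π / 2)) (fun θ => 1 - cos θ) :=
    (convexOn_const 1 (convex_Icc _ _)).sub hcos
  have hu0 : ∀ ⦃θ⦄, θ ∈ Icc 0 (π / 2) → 0 ≤ 1 - cos θ := fun θ _ => sub_nonneg.mpr (cos_le_one θ)
  have heq : (fun θ => edgeEnergy ν (cos θ))
      = (fun θ => (ν - 2) • (1 - cos θ)) + (fun θ => 1 - cos θ) ^ 2 := by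
    funext θ
    simp only [edgeEnergy, Pi.add_apply, Pi.pow_apply, smul_eq_mul]
    ring
  rw [heq]
  exact (hu.smul (sub_nonneg.mpr hν)).add (hu.pow hu0 2)

theorem ConvexOn.mul_apply_div_le_sum {ι : Type*} {f : ℝ → ℝ} {b L : ℝ}
    (hf : ConvexOn ℝ (Icc 0 b) f) (hmono : MonotoneOn f (Icc 0 b)) (hf0 : f 0 = 0)
    {s : Finset ι} {φ : ι → ℝ} (hφ : ∀ i ∈ s, φ i ∈ Icc 0 b) (hb : 0 < b)
    (hsum : b ≤ ∑ i ∈ s, φ i) (hL : (s.card : ℝ) ≤ L) :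
    L * f (b / L) ≤ ∑ i ∈ s, f (φ i) := by
  have hs : s.Nonempty := Finset.nonempty_of_sum_ne_zero (hb.trans_le hsum).ne'
  set m : ℝ := (s.card : ℝ)
  have hm : 1 ≤ m := Nat.one_le_cast.mpr hs.card_pos
  have hL0 : 0 < L := by linarith
  set avg := ∑ i ∈ s, m⁻¹ • φ i
  have hw : ∑ _i ∈ s, m⁻¹ = 1 := by
    rw [Finset.sum_const, nsmul_eq_mul]; exact mul_inv_cancel₀ (by positivity)
  have havg : avg ∈ Icc 0 b := (convex_Icc 0 b).sum_mem (fun _ _ => by positivity) hw hφ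
  have hjensen : f avg ≤ m⁻¹ * ∑ i ∈ s, f (φ i) := by
    rw [Finset.mul_sum]
    exact hf.map_sum_le (fun _ _ => by positivity) hw hφ
  have hratio : m / L ∈ Icc (0 : ℝ) 1 := ⟨by positivity, (div_le_one hL0).mpr hL⟩
  have hscaled : m / L * avg ∈ Icc 0 b :=
    ⟨mul_nonneg hratio.1 havg.1, (mul_le_of_le_one_left havg.1 hratio.2).trans havg.2⟩
  -- `m / L * avg` is a convex combination of `avg` and `0`, where `f` vanishes
  have hshrink : f (m / L * avg) ≤ m / L * f avg := by
    simpa [hf0] using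
      hf.2 havg (left_mem_Icc.mpr hb.le) hratio.1 (sub_nonneg.mpr hratio.2) (by ring)
  have hbL : b / L ≤ m / L * avg := by
    have : m * avg = ∑ i ∈ s, φ i := by
      simp only [avg]
      rw [← Finset.smul_sum, smul_eq_mul, mul_inv_cancel_left₀ (by positivity)]
    rw [div_mul_eq_mul_div, this]
    exact div_le_div_of_nonneg_right hsum hL0.le
  have hbL' : b / L ∈ Icc 0 b := ⟨by positivity, div_le_self hb.le (by linarith)⟩
  calc L * f (b / L) ≤ L * (m / L * f avg) :=
        mul_le_mul_of_nonneg_left ((hmono hbL' hscaled hbL).trans hshrink) hL0.le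
    _ = m * f avg := by field_simp
    _ ≤ m * (m⁻¹ * ∑ i ∈ s, f (φ i)) := mul_le_mul_of_nonneg_left hjensen (by positivity)
    _ = ∑ i ∈ s, f (φ i) := by field_simp

theorem mul_edgeEnergy_cos_le_sum {ι : Type*} {ν N : ℝ} (hν : 2 ≤ ν) {s : Finset ι}
    {θ : ι → ℝ} (hθ : ∀ i ∈ s, θ i ∈ Icc 0 π) (hsum : π / 2 ≤ ∑ i ∈ s, θ i)
    (hN : 2 * (s.card : ℝ) ≤ N) :
    N / 2 * edgeEnergy ν (cos (π / N)) ≤ ∑ i ∈ s, edgeEnergy ν (cos (θ i)) := by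
  have hpi := pi_pos
  -- convexity only holds on `[0, π / 2]`, so larger angles are cut down to `π / 2`
  have hclamp : ∀ i ∈ s, min (θ i) (π / 2) ∈ Icc 0 (π / 2) := fun i hi =>
    ⟨le_min (hθ i hi).1 (by positivity), min_le_right _ _⟩
  have hclamp_sum : π / 2 ≤ ∑ i ∈ s, min (θ i) (π / 2) := by
    by_cases hbig : ∃ i ∈ s, π / 2 ≤ θ i
    · obtain ⟨i, hi, hθi⟩ := hbig
      calc π / 2 = min (θ i) (π / 2) := (min_eq_right hθi).symm
        _ ≤ _ := Finset.single_le_sum (fun j hj => (hclamp j hj).1) hi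
    · push Not at hbig
      rwa [Finset.sum_congr rfl fun i hi => min_eq_left (hbig i hi).le]
  have hjensen := (convexOn_edgeEnergy_cos hν).mul_apply_div_le_sum
    ((monotoneOn_edgeEnergy_cos hν).mono (Icc_subset_Icc le_rfl (by linarith)))
    (by simp [edgeEnergy]) hclamp (by positivity) hclamp_sum (L := N / 2) (by linarith)
  rw [show π / 2 / (N / 2) = π / N by field_simp] at hjensen
  refine hjensen.trans (Finset.sum_le_sum fun i hi =>
    monotoneOn_edgeEnergy_cos hν ?_ (hθ i hi) (min_le_left _ _))
  exact ⟨(hclamp i hi).1, (hclamp i hi).2.trans (by linarith)⟩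

namespace SimpleGraph

variable {V : Type*}

lemma card_le_two_of_adj_of_degree_eq_one [Fintype V] {T : SimpleGraph V} [DecidableRel T.Adj]
    (hT : T.Connected) {v w : V} (hvw : T.Adj v w) (hv : T.degree v = 1) (hw : T.degree w = 1) :
    Fintype.card V ≤ 2 := by
  obtain ⟨_, -, hv'⟩ := degree_eq_one_iff_existsUnique_adj.mp hv
  obtain ⟨_, -, hw'⟩ := degree_eq_one_iff_existsUnique_adj.mp hw
  have hclosed : ∀ {a z : V} (p : T.Walk a z), a = v ∨ a = w → z = v ∨ z = w := by
    intro a z p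
    induction p with
    | nil => exact id
    | cons h q ih =>
      rintro (rfl | rfl)
      · exact ih (Or.inr ((hv' _ h).trans (hv' _ hvw).symm))
      · exact ih (Or.inl ((hw' _ h).trans (hw' _ hvw.symm).symm))
  classical
  calc Fintype.card V = (Finset.univ : Finset V).card := Finset.card_univ.symm
    _ ≤ ({v, w} : Finset V).card := Finset.card_le_card fun z _ => by
        obtain ⟨p⟩ := hT.preconnected v z
        simpa using hclosed p (Or.inl rfl)
    _ ≤ 2 := Finset.card_le_two

lemma dist_le_dist_induce {G : SimpleGraph V} {s : Set V} (hs : (G.induce s).Connected)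
    {a b : V} (ha : a ∈ s) (hb : b ∈ s) : G.dist a b ≤ (G.induce s).dist ⟨a, ha⟩ ⟨b, hb⟩ := by
  obtain ⟨p, hp⟩ := hs.exists_walk_length_eq_dist ⟨a, ha⟩ ⟨b, hb⟩
  rw [← hp, ← Walk.length_map (Embedding.induce s).toHom]
  exact dist_le _

theorem Connected.exists_dominating_connected_induce [Fintype V] {G : SimpleGraph V}
    (hG : G.Connected) (h3 : 3 ≤ Fintype.card V) :
    ∃ s : Set V, (G.induce s).Connected ∧ Nat.card s + 2 ≤ Fintype.card V ∧
      ∀ v ∉ s, ∃ w ∈ s, G.Adj v w := by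
  classical
  obtain ⟨T, hTG, hT⟩ := hG.exists_isTree_le
  have : Nontrivial V := Fintype.one_lt_card_iff_nontrivial.mp (by omega)
  set s : Set V := {v | T.degree v ≠ 1}
  have hleaf : ∀ v ∉ s, ∃ w ∈ s, T.Adj v w := by
    intro v hv
    obtain ⟨w, hvw, -⟩ := degree_eq_one_iff_existsUnique_adj.mp (not_not.mp hv)
    refine ⟨w, fun hw => ?_, hvw⟩
    have := card_le_two_of_adj_of_degree_eq_one hT.connected hvw (not_not.mp hv) hw
    omega
  have hs_ne : s.Nonempty := by
    obtain ⟨r⟩ := hG.nonempty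
    by_cases hr : r ∈ s
    exacts [⟨r, hr⟩, (hleaf r hr).imp fun _ h => h.1]
  have hs : (G.induce s).Connected := by
    have := hs_ne.to_subtype
    refine ⟨Preconnected.mono (fun a b h => hTG h)
      (hT.connected.preconnected.induce_of_degree_eq_one fun v hv => ?_)⟩
    obtain ⟨_, -, hv'⟩ := degree_eq_one_iff_existsUnique_adj.mp (not_not.mp hv)
    exact fun a ha b hb => (hv' a ha).trans (hv' b hb).symm
  have hcard : Nat.card s + 2 ≤ Fintype.card V := by
    obtain ⟨a, b, hab, ha, hb⟩ := hT.exists_ne_and_degree_eq_one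
    have hpair : ({a, b} : Set V) ⊆ sᶜ := by
      rintro z (rfl | rfl) <;> simpa [s]
    have := Set.ncard_le_ncard hpair
    rw [Set.ncard_pair hab] at this
    have := Set.ncard_add_ncard_compl s
    rw [Nat.card_eq_fintype_card] at this
    rw [Nat.card_coe_set_eq]
    omega
  exact ⟨s, hs, hcard, fun v hv => (hleaf v hv).imp fun w ⟨hw, hvw⟩ => ⟨hw, hTG hvw⟩⟩

theorem Connected.exists_forall_two_mul_dist_le [Finite V] {G : SimpleGraph V}
    (hG : G.Connected) : ∃ r, ∀ v, 2 * G.dist r v ≤ Nat.card V := by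
  induction hN : Nat.card V using Nat.strong_induction_on generalizing V with
  | _ N ih =>
  have := Fintype.ofFinite V
  rw [Nat.card_eq_fintype_card] at hN
  by_cases hsmall : N ≤ 2
  · obtain ⟨r⟩ := hG.nonempty
    refine ⟨r, fun v => ?_⟩
    obtain ⟨p, hp, hlen⟩ := hG.exists_path_of_dist r v
    have := hp.length_lt
    omega
  obtain ⟨s, hs, hcard, hdom⟩ := hG.exists_dominating_connected_induce (by omega)
  obtain ⟨⟨r, hrs⟩, hr⟩ := ih (Nat.card s) (by omega) hs rfl
  refine ⟨r, fun v => ?_⟩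
  by_cases hv : v ∈ s
  · have := dist_le_dist_induce hs hrs hv
    have := hr ⟨v, hv⟩
    omega
  · obtain ⟨w, hw, hvw⟩ := hdom v hv
    have h1 := dist_le_dist_induce hs hrs hw
    have h2 := hr ⟨w, hw⟩
    have h3 : G.dist r v ≤ G.dist r w + 1 := by
      obtain ⟨p, hp⟩ := hG.exists_walk_length_eq_dist r w
      rw [← hp, ← Walk.length_concat p hvw.symm]
      exact dist_le _
    omega

variable {G : SimpleGraph V}

theorem Walk.angle_le_sum_darts {E : Type*} [NormedAddCommGroup E] [InnerProductSpace ℝ E]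
    {u : V → E} (hu : ∀ v, u v ≠ 0) {a b : V} (p : G.Walk a b) :
    angle (u a) (u b) ≤ (p.darts.map fun d => angle (u d.fst) (u d.snd)).sum := by
  induction p with
  | nil => simp [angle_self (hu _)]
  | @cons a c b h q ih =>
    rw [Walk.darts_cons, List.map_cons, List.sum_cons]
    linarith [angle_le_angle_add_angle (u a) (u c) (u b)]

lemma Walk.IsPath.nodup_darts_append_map_symm {a b : V} {p : G.Walk a b} (hp : p.IsPath) :
    (p.darts ++ p.darts.map Dart.symm).Nodup := by
  have hdarts : p.darts.Nodup := Walk.darts_nodup_of_support_nodup hp.support_nodup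
  have hedges : (p.darts.map Dart.edge).Nodup := Walk.edges_eq_map_darts p ▸ hp.edges_nodup
  refine List.nodup_append.mpr ⟨hdarts, hdarts.map Dart.symm_involutive.injective, ?_⟩
  rintro _ hd d' hd' rfl
  obtain ⟨e, he, rfl⟩ := List.mem_map.mp hd'
  exact Dart.symm_ne e (List.inj_on_of_nodup_map hedges hd he (Dart.edge_symm e))

variable [Fintype V] [DecidableRel G.Adj]

lemma sum_neighborFinset_eq_sum_filter_adj (F : V → V → ℝ) :
    ∑ i, ∑ j ∈ G.neighborFinset i, F i j
      = ∑ q ∈ Finset.univ.filter (fun q : V × V => G.Adj q.1 q.2), F q.1 q.2 := by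
  rw [Finset.sum_filter, Fintype.sum_prod_type]
  refine Finset.sum_congr rfl fun i _ => ?_
  rw [neighborFinset_eq_filter, Finset.sum_filter]

theorem Walk.IsPath.two_mul_sum_darts_le {F : V → V → ℝ}
    (hsymm : ∀ i j, F i j = F j i) (hF : ∀ i j, G.Adj i j → 0 ≤ F i j) {a b : V}
    {p : G.Walk a b} (hp : p.IsPath) :
    2 * (p.darts.map fun d => F d.fst d.snd).sum ≤ ∑ i, ∑ j ∈ G.neighborFinset i, F i j := by
  classical
  set L := (p.darts ++ p.darts.map Dart.symm).map Dart.toProd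
  have hL : L.Nodup := hp.nodup_darts_append_map_symm.map Dart.toProd_injective
  have hsumL : (L.map fun q => F q.1 q.2).sum
      = 2 * (p.darts.map fun d => F d.fst d.snd).sum := by
    simp [L, List.sum_append, Function.comp_def, Dart.symm, hsymm, two_mul]
  rw [← hsumL, sum_neighborFinset_eq_sum_filter_adj, ← List.sum_toFinset _ hL]
  refine Finset.sum_le_sum_of_subset_of_nonneg ?_ fun q hq _ =>
    hF _ _ (Finset.mem_filter.mp hq).2
  intro q hq
  obtain ⟨d, -, rfl⟩ := List.mem_map.mp (List.mem_toFinset.mp hq)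
  exact Finset.mem_filter.mpr ⟨Finset.mem_univ _, d.adj⟩

end SimpleGraph

open SimpleGraph in
theorem card_mul_edgeEnergy_le_sum_neighbors {V : Type*} [Fintype V]
    {G : SimpleGraph V} [DecidableRel G.Adj] (hG : G.Connected)
    {E : Type*} [NormedAddCommGroup E] [InnerProductSpace ℝ E] {u : V → E}
    (hu : ∀ v, ‖u v‖ = 1) (hfar : ∀ r, ∃ l, inner ℝ (u r) (u l) ≤ 0) {ν : ℝ} (hν : 2 ≤ ν) :
    Fintype.card V * edgeEnergy ν (cos (π / Fintype.card V))
      ≤ ∑ i, ∑ j ∈ G.neighborFinset i, edgeEnergy ν (inner ℝ (u i) (u j)) := by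
  classical
  have hcos : ∀ i j, inner ℝ (u i) (u j) = cos (angle (u i) (u j)) := fun i j =>
    inner_eq_cos_angle_of_norm_eq_one (hu i) (hu j)
  obtain ⟨r, hr⟩ := hG.exists_forall_two_mul_dist_le
  obtain ⟨l, hl⟩ := hfar r
  have hfar_angle : π / 2 ≤ angle (u r) (u l) := by
    by_contra! h
    have := cos_pos_of_mem_Ioo ⟨by linarith [angle_nonneg (u r) (u l), pi_pos], h⟩
    linarith [hcos r l]
  obtain ⟨p, hp, hlen⟩ := hG.exists_path_of_dist r l
  have hnodup : p.darts.Nodup := Walk.darts_nodup_of_support_nodup hp.support_nodup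
  have hangles : π / 2 ≤ ∑ d ∈ p.darts.toFinset, angle (u d.fst) (u d.snd) := by
    rw [List.sum_toFinset _ hnodup]
    exact hfar_angle.trans (p.angle_le_sum_darts fun v h => by simpa [h] using hu v)
  have hshort : 2 * (p.darts.toFinset.card : ℝ) ≤ Fintype.card V := by
    rw [List.toFinset_card_of_nodup hnodup, Walk.length_darts, hlen]
    exact_mod_cast Nat.card_eq_fintype_card (α := V) ▸ hr l
  have hpath := mul_edgeEnergy_cos_le_sum hν
    (fun d _ => ⟨angle_nonneg _ _, angle_le_pi _ _⟩) hangles hshort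
  have hdouble := hp.two_mul_sum_darts_le (F := fun i j => edgeEnergy ν (inner ℝ (u i) (u j)))
    (fun i j => by rw [real_inner_comm]) fun i j _ =>
      edgeEnergy_nonneg hν (by simpa [hu] using real_inner_le_norm (u i) (u j))
  rw [← List.sum_toFinset _ hnodup] at hdouble
  simp only [hcos] at hdouble ⊢
  linarith

theorem Matrix.IsHermitian.dotProduct_mulVec_le_of_eigenvalues_le {m : Type*} [Fintype m]
    [DecidableEq m] {A : Matrix m m ℝ} (hA : A.IsHermitian) {β : ℝ}
    (hβ : ∀ i, hA.eigenvalues i ≤ β) (v : m → ℝ) : v ⬝ᵥ (A *ᵥ v) ≤ β * (v ⬝ᵥ v) := by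
  set b := hA.eigenvectorBasis
  have parseval : ∀ y : m → ℝ,
      v ⬝ᵥ y = ∑ i, ((b i).ofLp ⬝ᵥ v) * ((b i).ofLp ⬝ᵥ y) := fun y => by
    simpa [EuclideanSpace.inner_eq_star_dotProduct, dotProduct_comm] using
      (b.sum_inner_mul_inner (WithLp.toLp 2 v) (WithLp.toLp 2 y)).symm
  have hAT : Aᵀ = A := by rw [← conjTranspose_eq_transpose_of_trivial]; exact hA
  have hcoef : ∀ i, (b i).ofLp ⬝ᵥ (A *ᵥ v) = hA.eigenvalues i * ((b i).ofLp ⬝ᵥ v) := fun i => by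
    rw [dotProduct_mulVec, ← mulVec_transpose, hAT, hA.mulVec_eigenvectorBasis, smul_dotProduct,
      smul_eq_mul]
  rw [parseval, parseval, Finset.mul_sum]
  refine Finset.sum_le_sum fun i _ => ?_
  rw [hcoef]
  nlinarith [hβ i, mul_self_nonneg ((b i).ofLp ⬝ᵥ v)]

lemma sum_dotProduct_mulVec {ι κ R : Type*} [Fintype ι] [Fintype κ] [CommSemiring R]
    (A : Matrix ι ι R) (v : κ → ι → R) :
    ∑ a, v a ⬝ᵥ (A *ᵥ v a) = ∑ p, ∑ q, A p q * ∑ a, v a p * v a q := by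
  simp only [dotProduct, mulVec, Finset.mul_sum]
  rw [Finset.sum_comm]
  refine Finset.sum_congr rfl fun p _ => ?_
  rw [Finset.sum_comm]
  exact Finset.sum_congr rfl fun q _ => Finset.sum_congr rfl fun a _ => by ring

section Projection

variable {n : ℕ} {x y : Fin (n + 1) → ℝ}

lemma proj_transpose (x : Fin (n + 1) → ℝ) : (proj x)ᵀ = proj x := by
  simp [proj]

lemma proj_mul_self (hx : x ⬝ᵥ x = 1) : proj x * proj x = proj x := by
  simp only [proj, sub_mul, mul_sub, one_mul, mul_one, vecMulVec_mul_vecMulVec, hx, one_smul]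
  abel

lemma trace_proj (hx : x ⬝ᵥ x = 1) : trace (proj x) = n := by
  simp [proj, hx]

lemma trace_proj_mul_proj (hx : x ⬝ᵥ x = 1) (hy : y ⬝ᵥ y = 1) :
    trace (proj x * proj y) = n - 1 + (x ⬝ᵥ y) ^ 2 := by
  simp only [proj, sub_mul, mul_sub, one_mul, mul_one, vecMulVec_mul_vecMulVec, trace_sub,
    trace_one, trace_vecMulVec, hx, hy, dotProduct_smul, smul_eq_mul, Fintype.card_fin]
  push_cast
  ring

end Projection

section Linearization

variable {n N : ℕ} (G : SimpleGraph (Fin N)) [DecidableRel G.Adj] (k : Fin N → Fin N → ℝ)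
  {x : Fin N → Fin (n + 1) → ℝ}

def projColumn (x : Fin N → Fin (n + 1) → ℝ) (a : Fin (n + 1)) : Fin N × Fin (n + 1) → ℝ :=
  fun p => proj (x p.1) p.2 a

omit [DecidableRel G.Adj] in
lemma sum_projColumn_mul (x : Fin N → Fin (n + 1) → ℝ) (p q : Fin N × Fin (n + 1)) :
    ∑ a, projColumn x a p * projColumn x a q = (proj (x p.1) * proj (x q.1)) p.2 q.2 := by
  rw [mul_apply]
  refine Finset.sum_congr rfl fun a _ => ?_
  rw [projColumn, projColumn, ← proj_transpose (x q.1), transpose_apply, proj_transpose]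

lemma sum_Bmat_block (hx : ∀ i, x i ⬝ᵥ x i = 1) (i j : Fin N) :
    ∑ β, ∑ γ, Bmat G k x (i, β) (j, γ) * (proj (x i) * proj (x j)) β γ
      = (if i = j then -(∑ l ∈ G.neighborFinset i, k i l * (x l ⬝ᵥ x i)) * n else 0)
        + (if G.Adj i j then k i j * (n - 1 + (x i ⬝ᵥ x j) ^ 2) else 0) := by
  set d := ∑ l ∈ G.neighborFinset i, k i l * (x l ⬝ᵥ x i)
  have hblock : ∀ β γ, Bmat G k x (i, β) (j, γ) = (if i = j then (-d) • proj (x i)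
      else if G.Adj i j then k i j • (proj (x i) * proj (x j)) else 0) β γ := by
    intro β γ
    simp only [Bmat, of_apply]
    split_ifs <;> simp_all [d]
  simp only [hblock, ← hadamard_apply, sum_hadamard_eq, transpose_mul, proj_transpose]
  by_cases hij : i = j
  · subst hij
    simp [proj_mul_self (hx i), trace_proj (hx i)]
  by_cases hadj : G.Adj i j
  · have : proj (x i) * proj (x j) * (proj (x j) * proj (x i))
        = proj (x i) * proj (x j) * proj (x i) := by
      rw [mul_assoc, ← mul_assoc (proj (x j)), proj_mul_self (hx j), mul_assoc]
    simp only [hij, hadj, if_true, if_false, smul_mul_assoc, trace_smul, this, smul_eq_mul,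
      zero_add]
    rw [trace_mul_cycle, proj_mul_self (hx i), trace_proj_mul_proj (hx i) (hx j)]
  · simp [hij, hadj]

theorem sum_projColumn_dotProduct_Bmat_mulVec (hx : ∀ i, x i ⬝ᵥ x i = 1) :
    ∑ a, projColumn x a ⬝ᵥ (Bmat G k x *ᵥ projColumn x a)
      = ∑ i, ∑ j ∈ G.neighborFinset i, k i j * edgeEnergy n (x i ⬝ᵥ x j) := by
  rw [sum_dotProduct_mulVec]
  simp only [sum_projColumn_mul, Fintype.sum_prod_type]
  calc ∑ i, ∑ β, ∑ j, ∑ γ, Bmat G k x (i, β) (j, γ) * (proj (x i) * proj (x j)) β γ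
      = ∑ i, ∑ j, ∑ β, ∑ γ, Bmat G k x (i, β) (j, γ) * (proj (x i) * proj (x j)) β γ :=
        Finset.sum_congr rfl fun i _ => Finset.sum_comm
    _ = ∑ i, (-(∑ l ∈ G.neighborFinset i, k i l * (x l ⬝ᵥ x i)) * n
          + ∑ j ∈ G.neighborFinset i, k i j * (n - 1 + (x i ⬝ᵥ x j) ^ 2)) := by
        simp only [sum_Bmat_block G k hx, Finset.sum_add_distrib, Finset.sum_ite_eq,
          Finset.mem_univ, if_true, SimpleGraph.neighborFinset_eq_filter, Finset.sum_filter]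
    _ = _ := by
        refine Finset.sum_congr rfl fun i _ => ?_
        rw [neg_mul, Finset.sum_mul, neg_add_eq_sub, ← Finset.sum_sub_distrib]
        refine Finset.sum_congr rfl fun j _ => ?_
        rw [dotProduct_comm (x j), edgeEnergy]
        ring

omit [DecidableRel G.Adj] in
theorem sum_projColumn_dotProduct_self (hx : ∀ i, x i ⬝ᵥ x i = 1) :
    ∑ a, projColumn x a ⬝ᵥ projColumn x a = N * n := by
  simp only [dotProduct]
  rw [Finset.sum_comm]
  simp only [sum_projColumn_mul, Fintype.sum_prod_type, proj_mul_self (hx _)]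
  calc ∑ i, ∑ β, proj (x i) β β = ∑ _i : Fin N, (n : ℝ) :=
        Finset.sum_congr rfl fun i _ => trace_proj (hx i)
    _ = N * n := by simp

theorem sum_neighbors_mul_edgeEnergy_le_of_eigenvalues_le (hx : ∀ i, x i ⬝ᵥ x i = 1)
    (hB : (Bmat G k x).IsHermitian) {β : ℝ} (hβ : ∀ p, hB.eigenvalues p ≤ β) :
    ∑ i, ∑ j ∈ G.neighborFinset i, k i j * edgeEnergy n (x i ⬝ᵥ x j) ≤ β * (N * n) := by
  rw [← sum_projColumn_dotProduct_Bmat_mulVec G k hx, ← sum_projColumn_dotProduct_self hx,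
    Finset.mul_sum]
  exact Finset.sum_le_sum fun a _ => hB.dotProduct_mulVec_le_of_eigenvalues_le hβ _

end Linearization

theorem mul_card_mul_edgeEnergy_le_sum_of_dispersed {n N : ℕ} (hn : 2 ≤ n)
    {G : SimpleGraph (Fin N)} [DecidableRel G.Adj] (hconn : G.Connected)
    {k : Fin N → Fin N → ℝ} {K : ℝ} (hK0 : 0 ≤ K) (hKk : ∀ i j, G.Adj i j → K ≤ k i j)
    {x : Fin N → Fin (n + 1) → ℝ} (hunit : ∀ i, x i ⬝ᵥ x i = 1)
    (hdisp : ¬ ∃ y : Fin (n + 1) → ℝ, y ≠ 0 ∧ ∀ i, 0 < x i ⬝ᵥ y) :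
    K * (N * edgeEnergy n (cos (π / N)))
      ≤ ∑ i, ∑ j ∈ G.neighborFinset i, k i j * edgeEnergy n (x i ⬝ᵥ x j) := by
  set u : Fin N → EuclideanSpace ℝ (Fin (n + 1)) := fun i => WithLp.toLp 2 (x i)
  have hinner : ∀ i j, inner ℝ (u i) (u j) = x i ⬝ᵥ x j := fun i j => by
    simp [u, EuclideanSpace.inner_eq_star_dotProduct, dotProduct_comm]
  have hu : ∀ i, ‖u i‖ = 1 := fun i => by
    rw [norm_eq_sqrt_real_inner, hinner, hunit, sqrt_one]
  have hfar : ∀ r, ∃ l, inner ℝ (u r) (u l) ≤ 0 := by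
    intro r
    by_contra! h
    refine hdisp ⟨x r, fun h0 => by simpa [h0] using hunit r, fun l => ?_⟩
    simpa [hinner, dotProduct_comm] using h l
  have hn' : (2 : ℝ) ≤ n := by exact_mod_cast hn
  have hgeom := card_mul_edgeEnergy_le_sum_neighbors hconn hu hfar hn' (G := G)
  simp only [hinner, Fintype.card_fin] at hgeom
  refine (mul_le_mul_of_nonneg_left hgeom hK0).trans ?_
  simp only [Finset.mul_sum]
  refine Finset.sum_le_sum fun i _ => Finset.sum_le_sum fun j hj =>
    mul_le_mul_of_nonneg_right (hKk i j ((G.mem_neighborFinset i j).mp hj))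
      (edgeEnergy_nonneg hn' ?_)
  simpa [hinner, hu] using real_inner_le_norm (u i) (u j)

/-- At a dispersed configuration of unit vectors connected by a network with minimal
coupling gain `K`, the largest eigenvalue `β(x)` of `B(x)` satisfies
`β(x) ≥ (K/(n+1)) (n − 1 − cos(π/N)) (1 − cos(π/N)) `; in particular `β(x) > 0`. -/
theorem largest_eigenvalue_lower_bound_dispersed
    {n N : ℕ} (hn : 2 ≤ n) (hN : 2 ≤ N)
    (G : SimpleGraph (Fin N)) [DecidableRel G.Adj] (hconn : G.Connected)
    (k : Fin N → Fin N → ℝ)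
    (hpos : ∀ i j, G.Adj i j → 0 < k i j)
    (K : ℝ) (hK : IsLeast {r : ℝ | ∃ i j, G.Adj i j ∧ r = k i j} K)
    (x : Fin N → Fin (n + 1) → ℝ) (hunit : ∀ i, x i ⬝ᵥ x i = 1)
    (hdisp : ¬ ∃ y : Fin (n + 1) → ℝ, y ≠ 0 ∧ ∀ i, 0 < x i ⬝ᵥ y)
    (hB : (Bmat G k x).IsHermitian) :
    K / ((n : ℝ) + 1) * ((n : ℝ) - 1 - Real.cos (π / (N : ℝ))) * (1 - Real.cos (π / (N : ℝ)))
      ≤ Finset.univ.sup' ⟨(⟨0, by omega⟩, (0 : Fin (n + 1))), Finset.mem_univ _⟩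
          hB.eigenvalues ∧
    0 < Finset.univ.sup' ⟨(⟨0, by omega⟩, (0 : Fin (n + 1))), Finset.mem_univ _⟩
          hB.eigenvalues := by
  set β := Finset.univ.sup' ⟨(⟨0, by omega⟩, (0 : Fin (n + 1))), Finset.mem_univ _⟩
    hB.eigenvalues
  obtain ⟨⟨i₀, j₀, hadj₀, hK₀⟩, hKk⟩ := hK
  have hKpos : 0 < K := hK₀ ▸ hpos i₀ j₀ hadj₀
  have hlower := mul_card_mul_edgeEnergy_le_sum_of_dispersed hn hconn hKpos.le
    (fun i j h => hKk ⟨i, j, h, rfl⟩) hunit hdisp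
  have hupper := sum_neighbors_mul_edgeEnergy_le_of_eigenvalues_le G k hunit hB (β := β)
    fun p => Finset.le_sup' hB.eigenvalues (Finset.mem_univ p)
  have hN' : (2 : ℝ) ≤ N := by exact_mod_cast hN
  have hn' : (2 : ℝ) ≤ n := by exact_mod_cast hn
  have hq : cos (π / N) < 1 := by
    simpa using strictAntiOn_cos ⟨le_rfl, pi_pos.le⟩
      ⟨by positivity, div_le_self pi_pos.le (by linarith)⟩ (by positivity : 0 < π / N)
  have he : 0 < K * edgeEnergy n (cos (π / N)) :=
    mul_pos hKpos (mul_pos (by linarith) (by linarith))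
  have hbound : K * edgeEnergy n (cos (π / N)) ≤ β * n :=
    le_of_mul_le_mul_left (a := (N : ℝ)) (by linarith [hlower.trans hupper]) (by positivity)
  have hrewrite : K / (n + 1) * (n - 1 - cos (π / N)) * (1 - cos (π / N))
      = K * edgeEnergy n (cos (π / N)) / (n + 1) := by
    rw [edgeEnergy]; ring
  have hmain : K * edgeEnergy n (cos (π / N)) / (n + 1) ≤ β :=
    calc K * edgeEnergy n (cos (π / N)) / (n + 1)
        ≤ K * edgeEnergy n (cos (π / N)) / n := by gcongr; linarith
      _ ≤ β := (div_le_iff₀ (by positivity)).mpr hbound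
  rw [hrewrite]
  exact ⟨hmain, (div_pos he (by positivity)).trans_le hmain⟩
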